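/- arXiv:1811.10023 — 4 statements merged into one kernel-verified Lean document; each statement's English description precedes it below -/
import Mathlib

section
/- For every β > 0, the function ratio R(β) = K₁(β)/K₂(β) satisfies the Riccati-type differential equation R'(β) = (3/β)R(β) + R(β)² - 1. -/
open MeasureTheory Real Set

noncomputable def K0 (β : ℝ) : ℝ :=
  ∫ y in Set.Ioi (0:ℝ), (1 / Real.sqrt (1 + y^2)) * Real.exp (-β * Real.sqrt (1 + y^2))

noncomputable def K1 (β : ℝ) : ℝ :=
  ∫ y in Set.Ioi (0:ℝ), Real.exp (-β * Real.sqrt (1 + y^2))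

noncomputable def K2 (β : ℝ) : ℝ :=
  ∫ y in Set.Ioi (0:ℝ), ((2*y^2 + 1) / Real.sqrt (1 + y^2)) * Real.exp (-β * Real.sqrt (1 + y^2))

noncomputable def Mfun (β : ℝ) : ℝ :=
  ∫ q : EuclideanSpace ℝ (Fin 3), Real.exp (-β * Real.sqrt (1 + ‖q‖^2))

/-!
Write `u = √(1+y²)` and `E = e^{-βu}`. Differentiating under the integral sign gives
`K₁' = -∫ u E` and `K₂' = -∫ (2y²+1) E`. Integrating `d/dy (y E)` and `d/dy (y u E)` by parts
gives `K₁ = β ∫ (y²/u) E` and `K₂ = β ∫ y² E`. Since `(2y²+1)/u = u + y²/u`, this yields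
`K₁' = K₁/β - K₂` and `K₂' = -2K₂/β - K₁`, and the quotient rule turns these into the Riccati
equation.
-/

open Filter Topology Nat

lemma pow_mul_exp_neg_mul_le {c t : ℝ} (hc : 0 < c) (ht : 0 ≤ t) (n : ℕ) :
    t ^ n * exp (-(c * t)) ≤ n ! / c ^ n := by
  have h := pow_div_factorial_le_exp (x := c * t) (mul_nonneg hc.le ht) n
  rw [div_le_iff₀ (by positivity), mul_pow] at h
  rw [le_div_iff₀ (by positivity), exp_neg]
  calc t ^ n * (exp (c * t))⁻¹ * c ^ n = c ^ n * t ^ n * (exp (c * t))⁻¹ := by ring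
    _ ≤ exp (c * t) * n ! * (exp (c * t))⁻¹ := by gcongr
    _ = n ! := by field_simp

lemma abs_le_sqrt_one_add_sq (y : ℝ) : |y| ≤ √(1 + y ^ 2) :=
  abs_le_sqrt (by linarith [sq_abs y])

lemma one_le_sqrt_one_add_sq (y : ℝ) : 1 ≤ √(1 + y ^ 2) :=
  one_le_sqrt.2 (by nlinarith)

lemma hasDerivAt_sqrt_one_add_sq (y : ℝ) :
    HasDerivAt (fun y => √(1 + y ^ 2)) (y / √(1 + y ^ 2)) y := by
  have h := ((hasDerivAt_pow 2 y).const_add 1).sqrt (by positivity)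
  exact h.congr_deriv (by field_simp; ring)

lemma two_mul_sq_add_one_div_sqrt (y : ℝ) :
    (2 * y ^ 2 + 1) / √(1 + y ^ 2) = √(1 + y ^ 2) + y ^ 2 / √(1 + y ^ 2) := by
  have hu : 0 < √(1 + y ^ 2) := by positivity
  field_simp
  rw [sq_sqrt (by positivity)]
  ring

lemma abs_two_mul_sq_add_one_div_sqrt_le (y : ℝ) :
    |(2 * y ^ 2 + 1) / √(1 + y ^ 2)| ≤ 2 * √(1 + y ^ 2) ^ 1 := by
  rw [two_mul_sq_add_one_div_sqrt, abs_of_nonneg (by positivity), pow_one, two_mul]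
  gcongr
  rw [div_le_iff₀ (by positivity)]
  nlinarith [sq_sqrt (by positivity : (0 : ℝ) ≤ 1 + y ^ 2)]

lemma continuous_two_mul_sq_add_one_div_sqrt :
    Continuous fun y : ℝ => (2 * y ^ 2 + 1) / √(1 + y ^ 2) :=
  by fun_prop (disch := exact fun y => (by positivity : 0 < √(1 + y ^ 2)).ne')

/-- Half of the exponential decay pays for the power of `√(1+y²)`; the other half, together with
`y ≤ √(1+y²)`, leaves an integrable majorant. -/
lemma abs_mul_exp_neg_mul_sqrt_le {Q : ℝ → ℝ} {b C : ℝ} {n : ℕ} (hb : 0 < b)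
    (hQ : ∀ y, |Q y| ≤ C * √(1 + y ^ 2) ^ n) (y : ℝ) :
    |Q y * exp (-b * √(1 + y ^ 2))| ≤ C * (n ! / (b / 2) ^ n) * exp (-(b / 2) * y) := by
  set u := √(1 + y ^ 2)
  have hu : 0 < u := by positivity
  have hC : 0 ≤ C := nonneg_of_mul_nonneg_left ((abs_nonneg _).trans (hQ y)) (by positivity)
  have hsplit : exp (-b * u) = exp (-(b / 2 * u)) * exp (-(b / 2) * u) := by
    rw [← exp_add]; ring_nf
  have hdecay : exp (-(b / 2) * u) ≤ exp (-(b / 2) * y) :=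
    exp_le_exp.2 (mul_le_mul_of_nonpos_left ((le_abs_self y).trans (abs_le_sqrt_one_add_sq y))
      (by linarith))
  rw [abs_mul, abs_exp, hsplit]
  calc |Q y| * (exp (-(b / 2 * u)) * exp (-(b / 2) * u))
      ≤ C * (u ^ n * exp (-(b / 2 * u))) * exp (-(b / 2) * u) := by
        rw [← mul_assoc, ← mul_assoc C]; gcongr; exact hQ y
    _ ≤ C * (n ! / (b / 2) ^ n) * exp (-(b / 2) * y) := by
        gcongr
        exact pow_mul_exp_neg_mul_le (half_pos hb) hu.le n

lemma integrableOn_mul_exp_neg_mul_sqrt {Q : ℝ → ℝ} {b C : ℝ} {n : ℕ} (hb : 0 < b)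
    (hQc : Continuous Q) (hQ : ∀ y, |Q y| ≤ C * √(1 + y ^ 2) ^ n) :
    IntegrableOn (fun y => Q y * exp (-b * √(1 + y ^ 2))) (Ioi 0) := by
  refine Integrable.mono' ((exp_neg_integrableOn_Ioi 0 (half_pos hb)).const_mul
    (C * (n ! / (b / 2) ^ n))) (by fun_prop) (Eventually.of_forall fun y => ?_)
  simpa only [norm_eq_abs, neg_mul] using abs_mul_exp_neg_mul_sqrt_le hb hQ y

noncomputable def besselIntegral (Q : ℝ → ℝ) (β : ℝ) : ℝ :=
  ∫ y in Ioi 0, Q y * exp (-β * √(1 + y ^ 2))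

section besselIntegral

variable {P Q : ℝ → ℝ} {β C : ℝ} {n : ℕ}

lemma besselIntegral_add
    (hP : IntegrableOn (fun y => P y * exp (-β * √(1 + y ^ 2))) (Ioi 0))
    (hQ : IntegrableOn (fun y => Q y * exp (-β * √(1 + y ^ 2))) (Ioi 0)) :
    besselIntegral (fun y => P y + Q y) β = besselIntegral P β + besselIntegral Q β := by
  simp only [besselIntegral, add_mul]
  exact integral_add hP hQ

lemma besselIntegral_const_mul (c : ℝ) :
    besselIntegral (fun y => c * Q y) β = c * besselIntegral Q β := by
  simp only [besselIntegral, mul_assoc, integral_const_mul]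

lemma besselIntegral_pos (hQint : IntegrableOn (fun y => Q y * exp (-β * √(1 + y ^ 2))) (Ioi 0))
    (hQ : ∀ y, 0 < Q y) : 0 < besselIntegral Q β := by
  have hpos : ∀ y, 0 < Q y * exp (-β * √(1 + y ^ 2)) := fun y => mul_pos (hQ y) (exp_pos _)
  rw [besselIntegral, integral_pos_iff_support_of_nonneg (fun y => (hpos y).le) hQint,
    Function.support_eq_univ fun y => (hpos y).ne', Measure.restrict_apply_univ, volume_Ioi]
  exact ENNReal.zero_lt_top

lemma hasDerivAt_besselIntegral (hβ : 0 < β) (hQc : Continuous Q)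
    (hQ : ∀ y, |Q y| ≤ C * √(1 + y ^ 2) ^ n) :
    HasDerivAt (besselIntegral Q) (-besselIntegral (fun y => Q y * √(1 + y ^ 2)) β) β := by
  have hC : 0 ≤ C := nonneg_of_mul_nonneg_left ((abs_nonneg _).trans (hQ 0)) (by positivity)
  have hbound : ∀ y, |Q y * √(1 + y ^ 2)| ≤ C * √(1 + y ^ 2) ^ (n + 1) := fun y => by
    rw [abs_mul, abs_of_pos (a := √(1 + y ^ 2)) (by positivity), pow_succ _ n, ← mul_assoc]
    gcongr
    exact hQ y
  have hdiff := hasDerivAt_integral_of_dominated_loc_of_deriv_le (μ := volume.restrict (Ioi 0))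
    (F := fun b y => Q y * exp (-b * √(1 + y ^ 2)))
    (F' := fun b y => -(Q y * √(1 + y ^ 2) * exp (-b * √(1 + y ^ 2))))
    (bound := fun y => C * √(1 + y ^ 2) ^ (n + 1) * exp (-(β / 2) * √(1 + y ^ 2)))
    (Metric.ball_mem_nhds β (half_pos hβ))
    (Eventually.of_forall fun b => by fun_prop)
    (integrableOn_mul_exp_neg_mul_sqrt hβ hQc hQ)
    (by fun_prop)
    (ae_of_all _ fun y b hb => ?_)
    (integrableOn_mul_exp_neg_mul_sqrt (half_pos hβ) (C := C) (n := n + 1) (by fun_prop)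
      fun y => by rw [abs_mul, abs_of_nonneg hC, abs_of_nonneg (by positivity)])
    (ae_of_all _ fun y b _ => ?_)
  · unfold besselIntegral
    simpa only [integral_neg] using hdiff.2
  · have hb2 : β / 2 ≤ b := by
      have := abs_lt.1 (mem_ball_iff_norm.1 hb); linarith [this.1]
    rw [norm_neg, norm_mul _ (exp _), norm_eq_abs, norm_eq_abs, abs_exp]
    refine mul_le_mul (hbound y) (exp_le_exp.2 ?_) (by positivity) (by positivity)
    nlinarith [one_le_sqrt_one_add_sq y]
  · have := ((hasDerivAt_neg b).mul_const (√(1 + y ^ 2))).exp.const_mul (Q y)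
    exact this.congr_deriv (by ring)

/-- Integration by parts against `d/dy (G y * e^{-β√(1+y²)})`: the boundary term vanishes at `0`
because `G 0 = 0` and at infinity by `abs_mul_exp_neg_mul_sqrt_le`. -/
lemma besselIntegral_eq_mul_besselIntegral_of_hasDerivAt {G G' : ℝ → ℝ} (hβ : 0 < β)
    (hG : ∀ y, HasDerivAt G (G' y) y) (hG0 : G 0 = 0) (hG'c : Continuous G')
    (hGb : ∀ y, |G y| ≤ C * √(1 + y ^ 2) ^ n) (hG'b : ∀ y, |G' y| ≤ C * √(1 + y ^ 2) ^ n) :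
    besselIntegral G' β = β * besselIntegral (fun y => G y * y / √(1 + y ^ 2)) β := by
  have hGc : Continuous G := continuous_iff_continuousAt.2 fun y => (hG y).continuousAt
  have hu : ∀ y, 0 < √(1 + y ^ 2) := fun y => by positivity
  have hH : IntegrableOn (fun y => G y * y / √(1 + y ^ 2) * exp (-β * √(1 + y ^ 2))) (Ioi 0) := by
    refine integrableOn_mul_exp_neg_mul_sqrt (C := C) (n := n) hβ
      ((hGc.mul continuous_id).div (by fun_prop) fun y => (hu y).ne') fun y => ?_
    rw [abs_div, abs_mul, abs_of_pos (hu y), mul_div_assoc]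
    calc |G y| * (|y| / √(1 + y ^ 2)) ≤ |G y| * 1 := by
          gcongr; exact div_le_one_of_le₀ (abs_le_sqrt_one_add_sq y) (hu y).le
      _ ≤ C * √(1 + y ^ 2) ^ n := by rw [mul_one]; exact hGb y
  have hG'int := integrableOn_mul_exp_neg_mul_sqrt hβ hG'c hG'b
  have hderiv : ∀ y ∈ Ici (0 : ℝ), HasDerivAt (fun y => G y * exp (-β * √(1 + y ^ 2)))
      (G' y * exp (-β * √(1 + y ^ 2))
        - β * (G y * y / √(1 + y ^ 2) * exp (-β * √(1 + y ^ 2)))) y := fun y _ =>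
    ((hG y).mul (((hasDerivAt_sqrt_one_add_sq y).const_mul (-β)).exp)).congr_deriv (by ring)
  have hdecay : Tendsto (fun y => G y * exp (-β * √(1 + y ^ 2))) atTop (𝓝 0) := by
    refine squeeze_zero_norm (fun y => abs_mul_exp_neg_mul_sqrt_le hβ hGb y) ?_
    have := (tendsto_exp_neg_atTop_nhds_zero.comp
      (tendsto_id.const_mul_atTop (half_pos hβ))).const_mul (C * (n ! / (β / 2) ^ n))
    simpa only [mul_zero, neg_mul, Function.comp_def, id] using this
  have hparts :=
    integral_Ioi_of_hasDerivAt_of_tendsto' hderiv (hG'int.sub (hH.const_mul β)) hdecay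
  rw [integral_sub hG'int (hH.const_mul β), integral_const_mul, hG0, zero_mul, sub_zero,
    sub_eq_zero] at hparts
  exact hparts

end besselIntegral

lemma K1_eq_besselIntegral : K1 = besselIntegral fun _ => 1 := by
  ext β; simp only [K1, besselIntegral, one_mul]

lemma K2_eq_besselIntegral : K2 = besselIntegral fun y => (2 * y ^ 2 + 1) / √(1 + y ^ 2) := rfl

lemma K1_eq_mul_besselIntegral {β : ℝ} (hβ : 0 < β) :
    K1 β = β * besselIntegral (fun y => y ^ 2 / √(1 + y ^ 2)) β := by
  have h := besselIntegral_eq_mul_besselIntegral_of_hasDerivAt (C := 1) (n := 1) hβ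
    (G := id) (G' := fun _ => 1) hasDerivAt_id rfl continuous_const
    (fun y => by simpa using abs_le_sqrt_one_add_sq y)
    (fun y => by simpa using one_le_sqrt_one_add_sq y)
  simpa only [K1_eq_besselIntegral, id, ← sq] using h

lemma K2_eq_mul_besselIntegral {β : ℝ} (hβ : 0 < β) :
    K2 β = β * besselIntegral (fun y => y ^ 2) β := by
  have hu : ∀ y, 0 < √(1 + y ^ 2) := fun y => by positivity
  have h := besselIntegral_eq_mul_besselIntegral_of_hasDerivAt (C := 2) (n := 2) hβ
    (G := fun y => y * √(1 + y ^ 2)) (G' := fun y => (2 * y ^ 2 + 1) / √(1 + y ^ 2))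
    (fun y => ((hasDerivAt_id y).mul (hasDerivAt_sqrt_one_add_sq y)).congr_deriv (by
      rw [two_mul_sq_add_one_div_sqrt]; simp only [id]; ring))
    (by simp) continuous_two_mul_sq_add_one_div_sqrt (fun y => ?_) (fun y => ?_)
  · rw [K2_eq_besselIntegral, h]
    congr 2; ext y
    field_simp [(hu y).ne']
  · rw [abs_mul, abs_of_pos (hu y)]
    nlinarith [abs_le_sqrt_one_add_sq y, one_le_sqrt_one_add_sq y, abs_nonneg y]
  · rw [abs_of_nonneg (by positivity), div_le_iff₀ (hu y)]
    nlinarith [sq_sqrt (by positivity : (0 : ℝ) ≤ 1 + y ^ 2), one_le_sqrt_one_add_sq y]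

lemma K2_pos {β : ℝ} (hβ : 0 < β) : 0 < K2 β := by
  rw [K2_eq_besselIntegral]
  exact besselIntegral_pos (integrableOn_mul_exp_neg_mul_sqrt hβ
    continuous_two_mul_sq_add_one_div_sqrt abs_two_mul_sq_add_one_div_sqrt_le)
    fun y => by positivity

lemma hasDerivAt_K1 {β : ℝ} (hβ : 0 < β) : HasDerivAt K1 (K1 β / β - K2 β) β := by
  have hu : ∀ y, 0 < √(1 + y ^ 2) := fun y => by positivity
  have hK2 : K2 β = besselIntegral (fun y => √(1 + y ^ 2)) β
      + besselIntegral (fun y => y ^ 2 / √(1 + y ^ 2)) β := by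
    simp only [K2_eq_besselIntegral, two_mul_sq_add_one_div_sqrt]
    refine besselIntegral_add (integrableOn_mul_exp_neg_mul_sqrt (C := 1) (n := 1) hβ
      (by fun_prop) fun y => by simp [abs_of_pos (hu y)])
      (integrableOn_mul_exp_neg_mul_sqrt (C := 1) (n := 1) hβ
        (by fun_prop (disch := exact fun y => (hu y).ne')) fun y => ?_)
    rw [abs_of_nonneg (by positivity), div_le_iff₀ (hu y)]
    nlinarith [sq_sqrt (by positivity : (0 : ℝ) ≤ 1 + y ^ 2)]
  have hK1 := K1_eq_mul_besselIntegral hβ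
  rw [K1_eq_besselIntegral] at hK1 ⊢
  convert hasDerivAt_besselIntegral (Q := fun _ => 1) (C := 1) (n := 0) hβ continuous_const
    (by simp) using 1
  simp only [one_mul]
  rw [hK2, hK1]
  field_simp
  ring

lemma hasDerivAt_K2 {β : ℝ} (hβ : 0 < β) : HasDerivAt K2 (-(2 * K2 β / β + K1 β)) β := by
  have hQu : (fun y => (2 * y ^ 2 + 1) / √(1 + y ^ 2) * √(1 + y ^ 2)) = fun y => 2 * y ^ 2 + 1 := by
    ext y; field_simp [(by positivity : 0 < √(1 + y ^ 2)).ne']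
  have h2y2 : ∀ y : ℝ, |2 * y ^ 2| ≤ 2 * √(1 + y ^ 2) ^ 2 := fun y => by
    rw [abs_of_nonneg (by positivity), sq_sqrt (by positivity)]
    linarith
  have h := hasDerivAt_besselIntegral hβ continuous_two_mul_sq_add_one_div_sqrt
    abs_two_mul_sq_add_one_div_sqrt_le
  rw [hQu, besselIntegral_add (integrableOn_mul_exp_neg_mul_sqrt hβ (by fun_prop) h2y2)
    (integrableOn_mul_exp_neg_mul_sqrt (C := 1) (n := 0) hβ continuous_const (by simp)),
    besselIntegral_const_mul, ← K1_eq_besselIntegral] at h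
  rwa [K2_eq_mul_besselIntegral hβ, mul_left_comm, mul_div_cancel_left₀ _ hβ.ne']

theorem riccati_K1_div_K2 (β : ℝ) (hβ : 0 < β) :
    deriv (fun b => K1 b / K2 b) β
      = (3 / β) * (K1 β / K2 β) + (K1 β / K2 β)^2 - 1 := by
  have hK2 := (K2_pos hβ).ne'
  rw [((hasDerivAt_K1 hβ).fun_div (hasDerivAt_K2 hβ) hK2).deriv]
  field_simp
  ring
end

section
/- For every β ≥ 1, K₀(β) + K₁(β) ≤ (1/2)e^{-β}(8 + 1/β - 3/(16β²) + 45/(64β³))·√(π/(8β)). -/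
open MeasureTheory Real Set

/-!
Substitute `y = sinh r` and then `z = sinh (r / 2)`, i.e. `y = sinh (2 * arsinh z)`. Then
`√(1 + y²) = cosh r = 1 + 2z²` and `dy = 2(1 + 2z²)/√(1 + z²) dz`, so that
`K₀(β) + K₁(β) = 4e^{-β} ∫₀^∞ √(1 + z²) e^{-2βz²} dz`.
Bounding `√(1 + z²) ≤ 1 + z²/2 - z⁴/8 + 3z⁶/8` reduces the claim to the Gaussian moments
`∫₀^∞ z^{2k} e^{-bz²} dz`, which follow from `∫₀^∞ e^{-bz²} dz = √(π/b)/2` and the recursion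
`∫₀^∞ z^{n+2} e^{-bz²} dz = (n+1)/(2b) ∫₀^∞ z^n e^{-bz²} dz`.
-/

lemma sqrt_one_add_sq_le (z : ℝ) : √(1 + z ^ 2) ≤ 1 + z ^ 2 / 2 - z ^ 4 / 8 + 3 * z ^ 6 / 8 := by
  have hP : 0 ≤ 1 + z ^ 2 / 2 - z ^ 4 / 8 + 3 * z ^ 6 / 8 := by
    nlinarith [mul_nonneg (sq_nonneg (1 - z ^ 2)) (sq_nonneg z), sq_nonneg z, sq_nonneg (z ^ 2)]
  refine sqrt_le_iff.2 ⟨hP, ?_⟩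
  nlinarith [mul_nonneg (mul_nonneg (sq_nonneg (z ^ 2 - 5 / 6)) (sq_nonneg (z ^ 2))) (sq_nonneg z),
    sq_nonneg z, sq_nonneg (z ^ 2), pow_nonneg (sq_nonneg z) 3]

lemma sqrt_one_add_sinh_sq (t : ℝ) : √(1 + sinh t ^ 2) = cosh t := by
  rw [← cosh_sq', sqrt_sq (cosh_pos t).le]

lemma cosh_two_mul_arsinh (z : ℝ) : cosh (2 * arsinh z) = 1 + 2 * z ^ 2 := by
  rw [cosh_two_mul, cosh_arsinh, sinh_arsinh, sq_sqrt (by positivity)]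
  ring

noncomputable def sinhTwoMulArsinh : ℝ ≃o ℝ :=
  (sinhOrderIso.symm.trans (OrderIso.mulLeft₀ 2 two_pos)).trans sinhOrderIso

lemma sinhTwoMulArsinh_apply (z : ℝ) : sinhTwoMulArsinh z = sinh (2 * arsinh z) := rfl

lemma sinhTwoMulArsinh_image_Ioi_zero : sinhTwoMulArsinh '' Ioi 0 = Ioi 0 := by
  rw [OrderIso.image_Ioi, sinhTwoMulArsinh_apply, arsinh_zero, mul_zero, sinh_zero]

lemma hasDerivAt_sinhTwoMulArsinh (z : ℝ) :
    HasDerivAt sinhTwoMulArsinh (2 * (1 + 2 * z ^ 2) / √(1 + z ^ 2)) z := by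
  have h := ((hasDerivAt_arsinh z).const_mul 2).sinh
  rw [cosh_two_mul_arsinh] at h
  exact h.congr_deriv (by ring)

lemma sqrt_one_add_sinhTwoMulArsinh_sq (z : ℝ) :
    √(1 + sinhTwoMulArsinh z ^ 2) = 1 + 2 * z ^ 2 := by
  rw [sinhTwoMulArsinh_apply, sqrt_one_add_sinh_sq, cosh_two_mul_arsinh]

theorem integral_Ioi_comp_sqrt_one_add_sq {E : Type*} [NormedAddCommGroup E] [NormedSpace ℝ E]
    (F : ℝ → E) :
    ∫ y in Ioi (0 : ℝ), F (√(1 + y ^ 2)) =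
      ∫ z in Ioi (0 : ℝ), (2 * (1 + 2 * z ^ 2) / √(1 + z ^ 2)) • F (1 + 2 * z ^ 2) := by
  conv_lhs => rw [← sinhTwoMulArsinh_image_Ioi_zero]
  rw [integral_image_eq_integral_abs_deriv_smul measurableSet_Ioi
    (fun z _ => (hasDerivAt_sinhTwoMulArsinh z).hasDerivWithinAt)
    sinhTwoMulArsinh.injective.injOn]
  refine setIntegral_congr_fun measurableSet_Ioi fun z _ => ?_
  rw [sqrt_one_add_sinhTwoMulArsinh_sq, abs_of_pos (by positivity)]

lemma integrableOn_exp_neg_mul_sqrt_one_add_sq {β : ℝ} (hβ : 0 < β) :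
    IntegrableOn (fun y => exp (-β * √(1 + y ^ 2))) (Ioi 0) := by
  refine (exp_neg_integrableOn_Ioi 0 hβ).mono' (by fun_prop : Continuous _).aestronglyMeasurable ?_
  refine Filter.Eventually.of_forall fun y => ?_
  rw [norm_of_nonneg (exp_pos _).le, exp_le_exp, neg_mul, neg_mul, neg_le_neg_iff]
  exact mul_le_mul_of_nonneg_left ((le_abs_self y).trans (abs_le_sqrt (by linarith))) hβ.le

lemma integrableOn_inv_sqrt_one_add_sq_mul_exp {β : ℝ} (hβ : 0 < β) :
    IntegrableOn (fun y => 1 / √(1 + y ^ 2) * exp (-β * √(1 + y ^ 2))) (Ioi 0) := by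
  refine (integrableOn_exp_neg_mul_sqrt_one_add_sq hβ).mono'
    (by fun_prop (disch := intro; positivity) : Continuous _).aestronglyMeasurable ?_
  refine Filter.Eventually.of_forall fun y => ?_
  have h1 : 1 ≤ √(1 + y ^ 2) := one_le_sqrt.2 (by nlinarith)
  rw [norm_of_nonneg (by positivity)]
  exact mul_le_of_le_one_left (exp_pos _).le ((div_le_one (by positivity)).2 h1)

lemma K0_add_K1_eq {β : ℝ} (hβ : 0 < β) :
    K0 β + K1 β = 4 * exp (-β) * ∫ z in Ioi (0 : ℝ), √(1 + z ^ 2) * exp (-(2 * β) * z ^ 2) := by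
  rw [K0, K1, ← integral_add (integrableOn_inv_sqrt_one_add_sq_mul_exp hβ)
    (integrableOn_exp_neg_mul_sqrt_one_add_sq hβ), ← integral_const_mul,
    integral_Ioi_comp_sqrt_one_add_sq (fun s => 1 / s * exp (-β * s) + exp (-β * s))]
  refine setIntegral_congr_fun measurableSet_Ioi fun z _ => ?_
  have hs : √(1 + z ^ 2) ^ 2 = 1 + z ^ 2 := sq_sqrt (by positivity)
  have hs0 : 0 < √(1 + z ^ 2) := sqrt_pos.2 (by positivity)
  rw [smul_eq_mul, show -β * (1 + 2 * z ^ 2) = -β + -(2 * β) * z ^ 2 by ring, exp_add]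
  field_simp
  linear_combination -4 * hs

lemma integrableOn_pow_mul_exp_neg_mul_sq {b : ℝ} (hb : 0 < b) (n : ℕ) :
    IntegrableOn (fun z : ℝ => z ^ n * exp (-b * z ^ 2)) (Ioi 0) := by
  simpa only [rpow_natCast] using integrableOn_rpow_mul_exp_neg_mul_sq hb (s := n)
    (by linarith [n.cast_nonneg (α := ℝ)])

lemma integral_Ioi_pow_mul_exp_neg_mul_sq {b : ℝ} (hb : 0 < b) (n : ℕ) :
    ∫ z in Ioi (0 : ℝ), z ^ n * exp (-b * z ^ 2) =
      b ^ (-((n : ℝ) + 1) / 2) * (1 / 2) * Gamma (((n : ℝ) + 1) / 2) := by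
  rw [← integral_rpow_mul_exp_neg_mul_rpow two_pos (by linarith [n.cast_nonneg (α := ℝ)]) hb]
  refine setIntegral_congr_fun measurableSet_Ioi fun z _ => ?_
  simp only [rpow_natCast, ← rpow_two]

lemma integral_Ioi_pow_add_two_mul_exp_neg_mul_sq {b : ℝ} (hb : 0 < b) (n : ℕ) :
    ∫ z in Ioi (0 : ℝ), z ^ (n + 2) * exp (-b * z ^ 2) =
      (n + 1) / (2 * b) * ∫ z in Ioi (0 : ℝ), z ^ n * exp (-b * z ^ 2) := by
  have hn : ((n : ℝ) + 1) / 2 ≠ 0 := by positivity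
  rw [integral_Ioi_pow_mul_exp_neg_mul_sq hb, integral_Ioi_pow_mul_exp_neg_mul_sq hb,
    show ((n + 2 : ℕ) : ℝ) + 1 = (n + 1) + 2 by push_cast; ring, add_div _ 2, div_self two_ne_zero,
    Gamma_add_one hn, show -((n : ℝ) + 1 + 2) / 2 = -((n : ℝ) + 1) / 2 - 1 by ring,
    rpow_sub_one hb.ne']
  field_simp

lemma integral_sqrt_one_add_sq_mul_exp_neg_mul_sq_le {b : ℝ} (hb : 0 < b) :
    ∫ z in Ioi (0 : ℝ), √(1 + z ^ 2) * exp (-b * z ^ 2) ≤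
      (1 + 1 / (4 * b) - 3 / (32 * b ^ 2) + 45 / (64 * b ^ 3)) * (√(π / b) / 2) := by
  set M : ℕ → ℝ := fun n => ∫ z in Ioi (0 : ℝ), z ^ n * exp (-b * z ^ 2) with hM
  have hint (n : ℕ) := integrableOn_pow_mul_exp_neg_mul_sq hb n
  have hrec (n : ℕ) : M (n + 2) = (n + 1) / (2 * b) * M n :=
    integral_Ioi_pow_add_two_mul_exp_neg_mul_sq hb n
  have hM0 : M 0 = √(π / b) / 2 := by simp only [hM, pow_zero, one_mul, integral_gaussian_Ioi]
  have h2 := (hint 2).div_const 2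
  have h4 := (hint 4).div_const 8
  have h6 := ((hint 6).const_mul 3).div_const 8
  calc ∫ z in Ioi (0 : ℝ), √(1 + z ^ 2) * exp (-b * z ^ 2)
      ≤ ∫ z in Ioi (0 : ℝ), z ^ 0 * exp (-b * z ^ 2) + z ^ 2 * exp (-b * z ^ 2) / 2
          - z ^ 4 * exp (-b * z ^ 2) / 8 + 3 * (z ^ 6 * exp (-b * z ^ 2)) / 8 := by
        refine integral_mono_of_nonneg (Filter.Eventually.of_forall fun z => by positivity)
          ((((hint 0).add h2).sub h4).add h6) (Filter.Eventually.of_forall fun z => ?_)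
        have := mul_le_mul_of_nonneg_right (sqrt_one_add_sq_le z) (exp_pos (-b * z ^ 2)).le
        dsimp only
        linarith
    _ = M 0 + M 2 / 2 - M 4 / 8 + 3 * M 6 / 8 := by
        rw [integral_add ?_ h6, integral_sub ?_ h4, integral_add (hint 0) h2, integral_div,
          integral_div, integral_div, integral_const_mul]
        exacts [(hint 0).add h2, ((hint 0).add h2).sub h4]
    _ = _ := by
        rw [hrec 4, hrec 2, hrec 0, hM0]
        push_cast
        field_simp
        ring

theorem K0_add_K1_upper_bound (β : ℝ) (hβ : 1 ≤ β) :
    K0 β + K1 β ≤ (1/2) * Real.exp (-β)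
      * (8 + 1/β - 3/(16*β^2) + 45/(64*β^3)) * Real.sqrt (Real.pi / (8*β)) := by
  have hβ0 : 0 < β := one_pos.trans_le hβ
  have hsqrt : √(π / (2 * β)) = 2 * √(π / (8 * β)) := by
    rw [show π / (2 * β) = 2 ^ 2 * (π / (8 * β)) by field_simp; ring, sqrt_mul (by norm_num),
      sqrt_sq (by norm_num)]
  calc K0 β + K1 β
      = 4 * exp (-β) * ∫ z in Ioi (0 : ℝ), √(1 + z ^ 2) * exp (-(2 * β) * z ^ 2) := K0_add_K1_eq hβ0
    _ ≤ 4 * exp (-β) * ((1 + 1 / (4 * (2 * β)) - 3 / (32 * (2 * β) ^ 2) + 45 / (64 * (2 * β) ^ 3))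
          * (√(π / (2 * β)) / 2)) := by
        gcongr
        exact integral_sqrt_one_add_sq_mul_exp_neg_mul_sq_le (by positivity)
    _ = _ := by
        rw [hsqrt]
        field_simp
        ring
end

section
/- For every β ≥ 1, K₀(β) ≥ 2e^{-β}(1 - 1/(8β))√(π/(8β)). -/
/-!
Writing `y = sinh r` gives `K0 β = ∫₀^∞ exp (-β cosh r) dr`, and with `z = sinh (r / 2)`, i.e.
`y = 2 z √(1 + z²)` and `√(1 + y²) = cosh r = 1 + 2 z²`, this becomes
`K0 β = 2 e^{-β} ∫₀^∞ e^{-2β z²} / √(1 + z²) dz`.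
Bounding `1 / √(1 + z²) ≥ 1 - z² / 2` leaves the Gaussian integrals
`∫₀^∞ e^{-b z²} = √(π / b) / 2` and `∫₀^∞ z² e^{-b z²} = √(π / b) / (4 b)`, which at `b = 2β`
give exactly the stated bound.
-/

open MeasureTheory Real Set

open Filter

theorem integral_sq_mul_exp_neg_mul_sq_Ioi {b : ℝ} (hb : 0 < b) :
    ∫ x in Ioi (0:ℝ), x ^ 2 * exp (-b * x ^ 2) = √(π / b) / (4 * b) := by
  have h := integral_rpow_mul_exp_neg_mul_rpow (p := 2) (q := 2) two_pos (by norm_num) hb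
  simp only [rpow_two] at h
  rw [h, show ((2:ℝ) + 1) / 2 = 1 / 2 + 1 by norm_num, Gamma_add_one (by norm_num),
    Gamma_one_half_eq, show -((2:ℝ) + 1) / 2 = -1 + -(1 / 2) by norm_num, rpow_add hb,
    rpow_neg_one, rpow_neg hb.le, ← sqrt_eq_rpow, sqrt_div' _ hb.le]
  field_simp
  ring

theorem integrableOn_sq_mul_exp_neg_mul_sq {b : ℝ} (hb : 0 < b) :
    IntegrableOn (fun x : ℝ => x ^ 2 * exp (-b * x ^ 2)) (Ioi 0) := by
  simpa using integrableOn_rpow_mul_exp_neg_mul_sq hb (s := 2) (by norm_num)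

theorem integrableOn_one_sub_half_sq_mul_exp_neg_mul_sq {b : ℝ} (hb : 0 < b) :
    IntegrableOn (fun x : ℝ => (1 - x ^ 2 / 2) * exp (-b * x ^ 2)) (Ioi 0) := by
  simp_rw [sub_mul, one_mul, div_mul_eq_mul_div]
  exact (integrable_exp_neg_mul_sq hb).integrableOn.sub
    ((integrableOn_sq_mul_exp_neg_mul_sq hb).div_const 2)

theorem integral_one_sub_half_sq_mul_exp_neg_mul_sq_Ioi {b : ℝ} (hb : 0 < b) :
    ∫ x in Ioi (0:ℝ), (1 - x ^ 2 / 2) * exp (-b * x ^ 2) = (1 - 1 / (4 * b)) * (√(π / b) / 2) := by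
  simp_rw [sub_mul, one_mul, div_mul_eq_mul_div]
  rw [integral_sub (integrable_exp_neg_mul_sq hb).integrableOn
    ((integrableOn_sq_mul_exp_neg_mul_sq hb).div_const 2), integral_div, integral_gaussian_Ioi,
    integral_sq_mul_exp_neg_mul_sq_Ioi hb]
  field_simp

theorem one_sub_half_le_inv_sqrt_one_add {t : ℝ} (ht : -1 < t) : 1 - t / 2 ≤ (√(1 + t))⁻¹ := by
  rcases le_or_gt 2 t with h | h
  · exact (by linarith : 1 - t / 2 ≤ 0).trans (by positivity)
  · have hs : 0 < √(1 + t) := sqrt_pos.2 (by linarith)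
    have hs2 := sq_sqrt (by linarith : 0 ≤ 1 + t)
    rw [← one_div, le_div_iff₀ hs]
    -- `((1 - t / 2) * √(1 + t)) ^ 2 = 1 - t ^ 2 * (3 - t) / 4`
    nlinarith [mul_nonneg (sq_nonneg t) (by linarith : 0 ≤ 3 - t)]

theorem sqrt_one_add_sq_two_mul_mul_sqrt (z : ℝ) :
    √(1 + (2 * z * √(1 + z ^ 2)) ^ 2) = 1 + 2 * z ^ 2 := by
  rw [mul_pow, sq_sqrt (by positivity),
    show 1 + (2 * z) ^ 2 * (1 + z ^ 2) = (1 + 2 * z ^ 2) ^ 2 by ring]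
  exact sqrt_sq (by positivity)

theorem hasDerivAt_two_mul_mul_sqrt_one_add_sq (z : ℝ) :
    HasDerivAt (fun z => 2 * z * √(1 + z ^ 2)) (2 * (1 + 2 * z ^ 2) / √(1 + z ^ 2)) z := by
  have h : HasDerivAt (fun z => 2 * z * √(1 + z ^ 2)) _ z :=
    ((hasDerivAt_id' z).const_mul 2).mul (((hasDerivAt_pow 2 z).const_add 1).sqrt (by positivity))
  convert h using 1
  field_simp
  rw [sq_sqrt (by positivity)]
  push_cast
  ring

theorem continuous_inv_sqrt_one_add_sq : Continuous fun y : ℝ => (√(1 + y ^ 2))⁻¹ :=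
  (continuous_const.add (continuous_pow 2)).sqrt.inv₀ fun y =>
    (sqrt_pos.2 (by positivity : (0:ℝ) < 1 + y ^ 2)).ne'

theorem continuous_one_div_sqrt_one_add_sq_mul_exp_neg_mul_sqrt (β : ℝ) :
    Continuous fun y : ℝ => 1 / √(1 + y ^ 2) * exp (-β * √(1 + y ^ 2)) := by
  simp only [one_div]
  exact continuous_inv_sqrt_one_add_sq.mul (by fun_prop)

theorem integrable_inv_sqrt_one_add_sq_mul_exp_neg_mul_sq {b : ℝ} (hb : 0 < b) :
    Integrable fun z : ℝ => (√(1 + z ^ 2))⁻¹ * exp (-b * z ^ 2) := by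
  refine (integrable_exp_neg_mul_sq hb).bdd_mul (c := 1)
    continuous_inv_sqrt_one_add_sq.aestronglyMeasurable (.of_forall fun z => ?_)
  rw [norm_inv, norm_of_nonneg (sqrt_nonneg _)]
  exact inv_le_one_of_one_le₀ (one_le_sqrt.2 (by nlinarith))

theorem integrableOn_inv_sqrt_one_add_sq_mul_exp_neg_mul_sqrt {β : ℝ} (hβ : 0 < β) :
    IntegrableOn (fun y : ℝ => 1 / √(1 + y ^ 2) * exp (-β * √(1 + y ^ 2))) (Ici 0) := by
  rw [integrableOn_Ici_iff_integrableOn_Ioi]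
  refine (exp_neg_integrableOn_Ioi 0 hβ).mono'
    (continuous_one_div_sqrt_one_add_sq_mul_exp_neg_mul_sqrt β).aestronglyMeasurable ?_
  filter_upwards [ae_restrict_mem measurableSet_Ioi] with y hy
  have hsy : y ≤ √(1 + y ^ 2) := le_sqrt_of_sq_le (by linarith)
  have hs1 : 1 ≤ √(1 + y ^ 2) := one_le_sqrt.2 (by nlinarith)
  rw [norm_of_nonneg (by positivity)]
  calc 1 / √(1 + y ^ 2) * exp (-β * √(1 + y ^ 2)) ≤ 1 * exp (-β * y) := by
        gcongr ?_ * ?_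
        · exact div_le_one_of_le₀ hs1 (sqrt_nonneg _)
        · exact exp_le_exp.2 (by nlinarith)
    _ = exp (-β * y) := one_mul _

theorem K0_eq_two_mul_exp_mul_integral {β : ℝ} (hβ : 0 < β) :
    K0 β = 2 * exp (-β) * ∫ z in Ioi (0:ℝ), (√(1 + z ^ 2))⁻¹ * exp (-(2 * β) * z ^ 2) := by
  set g : ℝ → ℝ := fun y => 1 / √(1 + y ^ 2) * exp (-β * √(1 + y ^ 2))
  set φ : ℝ → ℝ := fun z => 2 * z * √(1 + z ^ 2)
  set φ' : ℝ → ℝ := fun z => 2 * (1 + 2 * z ^ 2) / √(1 + z ^ 2)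
  have hcomp : ∀ z, (g ∘ φ) z * φ' z =
      2 * exp (-β) * ((√(1 + z ^ 2))⁻¹ * exp (-(2 * β) * z ^ 2)) := by
    intro z
    simp only [Function.comp, g, φ, φ', sqrt_one_add_sq_two_mul_mul_sqrt]
    rw [show -β * (1 + 2 * z ^ 2) = -β + -(2 * β) * z ^ 2 by ring, exp_add]
    field_simp
  have hsubst := integral_comp_mul_deriv_Ioi (a := 0) (g := g) (f := φ) (f' := φ')
    (by fun_prop) ?_ (fun z _ => (hasDerivAt_two_mul_mul_sqrt_one_add_sq z).hasDerivWithinAt)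
    (continuous_one_div_sqrt_one_add_sq_mul_exp_neg_mul_sqrt β).continuousOn ?_ ?_
  · simp only [hcomp, φ, mul_zero, zero_mul] at hsubst
    rw [K0, ← hsubst, integral_const_mul]
  · refine tendsto_atTop_mono' atTop ?_ tendsto_id
    filter_upwards [eventually_ge_atTop 0] with z hz
    have hs1 : 1 ≤ √(1 + z ^ 2) := one_le_sqrt.2 (by nlinarith)
    simp only [id, φ]
    nlinarith
  · refine (integrableOn_inv_sqrt_one_add_sq_mul_exp_neg_mul_sqrt hβ).mono_set ?_
    rintro _ ⟨z, hz, rfl⟩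
    exact mul_nonneg (mul_nonneg zero_le_two hz) (sqrt_nonneg _)
  · simp only [hcomp]
    exact ((integrable_inv_sqrt_one_add_sq_mul_exp_neg_mul_sq (by positivity)).const_mul
      _).integrableOn

theorem K0_lower_bound (β : ℝ) (hβ : 1 ≤ β) :
    K0 β ≥ 2 * Real.exp (-β) * (1 - 1/(8*β)) * Real.sqrt (Real.pi / (8*β)) := by
  have hb : 0 < 2 * β := by linarith
  have hmono : ∫ z in Ioi (0:ℝ), (1 - z ^ 2 / 2) * exp (-(2 * β) * z ^ 2) ≤
      ∫ z in Ioi (0:ℝ), (√(1 + z ^ 2))⁻¹ * exp (-(2 * β) * z ^ 2) :=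
    setIntegral_mono_on (integrableOn_one_sub_half_sq_mul_exp_neg_mul_sq hb)
      (integrable_inv_sqrt_one_add_sq_mul_exp_neg_mul_sq hb).integrableOn measurableSet_Ioi
      fun z _ => mul_le_mul_of_nonneg_right
        (one_sub_half_le_inv_sqrt_one_add (neg_one_lt_zero.trans_le (sq_nonneg z))) (exp_pos _).le
  have hsqrt : √(π / (2 * β)) / 2 = √(π / (8 * β)) := by
    rw [show π / (8 * β) = π / (2 * β) / 2 ^ 2 by ring,
      sqrt_div (div_nonneg pi_pos.le hb.le), sqrt_sq zero_le_two]
  rw [integral_one_sub_half_sq_mul_exp_neg_mul_sq_Ioi hb, hsqrt,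
    show 4 * (2 * β) = 8 * β by ring] at hmono
  rw [K0_eq_two_mul_exp_mul_integral (by linarith), ge_iff_le, mul_assoc]
  gcongr
end

section
/- The function ẽ(β) = K₁(β)/K₂(β) + 3/β is strictly decreasing on (0,∞). -/
open MeasureTheory Real Set

/-!
Write `ε(y) = √(1 + y²)`. Integrating by parts against `d/dy e^{-βε} = -β (y/ε) e^{-βε}`, with
`u = y ε` and `u = y + y³`, gives `K₂ = β G` and `K₁ + 3 G = β H`, where `G(β) = ∫₀^∞ y² e^{-βε}`
and `H(β) = ∫₀^∞ y² ε e^{-βε}` (up to `4π`, the integrals of `e^{-βε}` and `ε e^{-βε}` over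
momentum space `ℝ³`). Hence `ẽ = H / G` is the mean of `ε` under the weight `y² e^{-βε}`, which
decreases strictly in `β` because, for `a < b`,
`2 (H(a) G(b) - H(b) G(a)) = ∬ y² z² (ε(y) - ε(z)) (e^{-aε(y) - bε(z)} - e^{-bε(y) - aε(z)}) dy dz`
and this integrand is positive wherever `ε(y) ≠ ε(z)`.
-/

open Filter Topology

theorem sub_mul_exp_cross_sub_nonneg {a b : ℝ} (hab : a ≤ b) (p q : ℝ) :
    0 ≤ (p - q) * (exp (-a * p) * exp (-b * q) - exp (-b * p) * exp (-a * q)) := by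
  rw [← exp_add, ← exp_add]
  rcases le_total p q with h | h
  · exact mul_nonneg_of_nonpos_of_nonpos (by linarith)
      (sub_nonpos.2 (exp_le_exp.2 (by nlinarith)))
  · exact mul_nonneg (by linarith) (sub_nonneg.2 (exp_le_exp.2 (by nlinarith)))

theorem sub_mul_exp_cross_sub_pos {a b p q : ℝ} (hab : a < b) (hqp : q < p) :
    0 < (p - q) * (exp (-a * p) * exp (-b * q) - exp (-b * p) * exp (-a * q)) := by
  rw [← exp_add, ← exp_add]
  exact mul_pos (by linarith) (sub_pos.2 (exp_lt_exp.2 (by nlinarith)))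

theorem integral_pos_of_pos_on {α : Type*} [MeasurableSpace α] {μ : Measure α} {f : α → ℝ}
    (hf : 0 ≤ f) (hfi : Integrable f μ) {A : Set α} (hA : 0 < μ A) (hpos : ∀ x ∈ A, 0 < f x) :
    0 < ∫ x, f x ∂μ :=
  (integral_pos_iff_support_of_nonneg hf hfi).2
    (hA.trans_le (measure_mono fun x hx => (hpos x hx).ne'))

section Tilt

variable {α : Type*} [MeasurableSpace α] {μ : Measure α} [SFinite μ] {w s : α → ℝ} {a b : ℝ}

theorem integral_exp_tilt_cross_lt (hw : ∀ x, 0 ≤ w x) (hab : a < b)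
    (hGa : Integrable (fun x => w x * exp (-a * s x)) μ)
    (hGb : Integrable (fun x => w x * exp (-b * s x)) μ)
    (hHa : Integrable (fun x => w x * s x * exp (-a * s x)) μ)
    (hHb : Integrable (fun x => w x * s x * exp (-b * s x)) μ)
    {A B : Set α} (hA : 0 < μ A) (hB : 0 < μ B) (hwA : ∀ y ∈ A, 0 < w y) (hwB : ∀ z ∈ B, 0 < w z)
    (hs : ∀ y ∈ A, ∀ z ∈ B, s y < s z) :
    (∫ x, w x * s x * exp (-b * s x) ∂μ) * ∫ x, w x * exp (-a * s x) ∂μ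
      < (∫ x, w x * s x * exp (-a * s x) ∂μ) * ∫ x, w x * exp (-b * s x) ∂μ := by
  set D : α × α → ℝ := fun p => w p.1 * s p.1 * exp (-a * s p.1) * (w p.2 * exp (-b * s p.2))
    - w p.1 * s p.1 * exp (-b * s p.1) * (w p.2 * exp (-a * s p.2)) with hD
  have hDi : Integrable D (μ.prod μ) := (hHa.mul_prod hGb).sub (hHb.mul_prod hGa)
  have hDi' : Integrable (fun p => D p.swap) (μ.prod μ) := hDi.swap
  have hDint : ∫ p, D p ∂μ.prod μ =
      (∫ x, w x * s x * exp (-a * s x) ∂μ) * (∫ x, w x * exp (-b * s x) ∂μ)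
      - (∫ x, w x * s x * exp (-b * s x) ∂μ) * ∫ x, w x * exp (-a * s x) ∂μ := by
    rw [hD, integral_sub (hHa.mul_prod hGb) (hHb.mul_prod hGa),
      integral_prod_mul (fun x => w x * s x * exp (-a * s x)) (fun x => w x * exp (-b * s x)),
      integral_prod_mul (fun x => w x * s x * exp (-b * s x)) (fun x => w x * exp (-a * s x))]
  have hsymm (p : α × α) : D p + D p.swap = w p.1 * w p.2 * ((s p.1 - s p.2) *
      (exp (-a * s p.1) * exp (-b * s p.2) - exp (-b * s p.1) * exp (-a * s p.2))) := by
    simp only [hD, Prod.fst_swap, Prod.snd_swap]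
    ring
  have hpos : 0 < ∫ p, D p + D p.swap ∂μ.prod μ := by
    refine integral_pos_of_pos_on (fun p => ?_) (hDi.add hDi') (A := B ×ˢ A)
      (by rw [Measure.prod_prod]; exact ENNReal.mul_pos hB.ne' hA.ne') ?_
    · rw [hsymm]
      exact mul_nonneg (mul_nonneg (hw _) (hw _)) (sub_mul_exp_cross_sub_nonneg hab.le _ _)
    · rintro ⟨z, y⟩ ⟨hz, hy⟩
      rw [hsymm]
      exact mul_pos (mul_pos (hwB z hz) (hwA y hy)) (sub_mul_exp_cross_sub_pos hab (hs y hy z hz))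
  rw [integral_add hDi hDi', integral_prod_swap, hDint] at hpos
  linarith

end Tilt

noncomputable def energy (y : ℝ) : ℝ := √(1 + y ^ 2)

theorem energy_sq (y : ℝ) : energy y ^ 2 = 1 + y ^ 2 := sq_sqrt (by positivity)

theorem energy_pos (y : ℝ) : 0 < energy y := sqrt_pos.2 (by positivity)

theorem abs_le_energy (y : ℝ) : |y| ≤ energy y := abs_le_sqrt (by linarith)

theorem le_energy (y : ℝ) : y ≤ energy y := (le_abs_self y).trans (abs_le_energy y)

theorem energy_lt_energy {y z : ℝ} (hy : 0 ≤ y) (hyz : y < z) : energy y < energy z :=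
  sqrt_lt_sqrt (by positivity) (by nlinarith)

theorem continuous_energy : Continuous energy := by
  unfold energy
  fun_prop

theorem hasDerivAt_energy (y : ℝ) : HasDerivAt energy (y / energy y) y := by
  refine (((hasDerivAt_pow 2 y).const_add 1).sqrt (by positivity)).congr_deriv ?_
  have := (energy_pos y).ne'
  unfold energy at *
  field_simp
  norm_num

theorem tendsto_energy_atTop : Tendsto energy atTop atTop :=
  tendsto_atTop_mono le_energy tendsto_id

theorem tendsto_energy_pow_mul_exp_neg {c : ℝ} (hc : 0 < c) (n : ℕ) :
    Tendsto (fun y => energy y ^ n * exp (-c * energy y)) atTop (𝓝 0) := by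
  have := (tendsto_rpow_mul_exp_neg_mul_atTop_nhds_zero n c hc).comp tendsto_energy_atTop
  simpa [Function.comp_def, rpow_natCast] using this

theorem integrableOn_mul_exp_neg_energy {β : ℝ} (hβ : 0 < β) {g : ℝ → ℝ} (hg : Continuous g)
    {C : ℝ} {n : ℕ} (hbound : ∀ y, |g y| ≤ C * energy y ^ n) :
    IntegrableOn (fun y => g y * exp (-β * energy y)) (Ioi 0) := by
  have hC : 0 ≤ C := nonneg_of_mul_nonneg_left ((abs_nonneg _).trans (hbound 0))
    (pow_pos (energy_pos 0) n)
  refine integrable_of_isBigO_exp_neg (half_pos hβ)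
    (hg.mul (continuous_exp.comp (continuous_const.mul continuous_energy))).continuousOn
    (Asymptotics.IsBigO.of_bound C ?_)
  filter_upwards [(tendsto_energy_pow_mul_exp_neg (half_pos hβ) n).eventually
    (eventually_le_nhds one_pos)] with y hy
  have hsplit : exp (-β * energy y) = exp (-(β / 2) * energy y) * exp (-(β / 2) * energy y) := by
    rw [← exp_add]
    ring_nf
  have hdecay : exp (-(β / 2) * energy y) ≤ exp (-(β / 2) * y) :=
    exp_le_exp.2 (by nlinarith [le_energy y])
  calc ‖g y * exp (-β * energy y)‖ = |g y| * exp (-β * energy y) := by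
        rw [norm_mul, norm_eq_abs, norm_of_nonneg (exp_pos _).le]
    _ ≤ C * (energy y ^ n * exp (-(β / 2) * energy y)) * exp (-(β / 2) * energy y) := by
        rw [hsplit, ← mul_assoc, ← mul_assoc]
        gcongr
        exact hbound y
    _ ≤ C * 1 * exp (-(β / 2) * y) := by gcongr
    _ = C * ‖exp (-(β / 2) * y)‖ := by rw [mul_one, norm_of_nonneg (exp_pos _).le]

theorem integral_deriv_mul_exp_neg_energy {β : ℝ} (hβ : 0 < β) {u u' v : ℝ → ℝ}
    (hu : ∀ y, HasDerivAt u (u' y) y) (hu0 : u 0 = 0) (huv : ∀ y, u y * y = v y * energy y)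
    {C : ℝ} {n : ℕ} (hbound : ∀ y, |u y| ≤ C * energy y ^ n)
    (hu'i : IntegrableOn (fun y => u' y * exp (-β * energy y)) (Ioi 0))
    (hvi : IntegrableOn (fun y => v y * exp (-β * energy y)) (Ioi 0)) :
    ∫ y in Ioi 0, u' y * exp (-β * energy y) = β * ∫ y in Ioi 0, v y * exp (-β * energy y) := by
  have hderiv (y : ℝ) : HasDerivAt (fun t => u t * exp (-β * energy t))
      (u' y * exp (-β * energy y) - β * (v y * exp (-β * energy y))) y := by
    refine ((hu y).mul ((hasDerivAt_energy y).const_mul (-β)).exp).congr_deriv ?_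
    have hv : u y * (y / energy y) = v y := by
      rw [mul_div_assoc', huv, mul_div_cancel_right₀ _ (energy_pos y).ne']
    linear_combination (-β * exp (-β * energy y)) * hv
  have hlim : Tendsto (fun y => u y * exp (-β * energy y)) atTop (𝓝 0) := by
    refine squeeze_zero_norm (fun y => ?_) (by
      simpa only [mul_zero] using (tendsto_energy_pow_mul_exp_neg hβ n).const_mul C)
    rw [norm_mul, norm_eq_abs, norm_of_nonneg (exp_pos _).le, ← mul_assoc]
    exact mul_le_mul_of_nonneg_right (hbound y) (exp_pos _).le
  have hcont : Continuous fun y => u y * exp (-β * energy y) :=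
    (continuous_iff_continuousAt.2 fun y => (hu y).continuousAt).mul
      (continuous_exp.comp (continuous_const.mul continuous_energy))
  have h := integral_Ioi_of_hasDerivAt_of_tendsto hcont.continuousWithinAt
    (fun y _ => hderiv y) (hu'i.sub (hvi.const_mul β)) hlim
  rw [integral_sub hu'i (hvi.const_mul β), integral_const_mul, hu0, zero_mul, sub_zero] at h
  linarith

noncomputable def partitionIntegral (β : ℝ) : ℝ := ∫ y in Ioi 0, y ^ 2 * exp (-β * energy y)

noncomputable def energyIntegral (β : ℝ) : ℝ :=
  ∫ y in Ioi 0, y ^ 2 * energy y * exp (-β * energy y)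

theorem integrableOn_exp_neg_energy {β : ℝ} (hβ : 0 < β) :
    IntegrableOn (fun y => exp (-β * energy y)) (Ioi 0) := by
  simpa using integrableOn_mul_exp_neg_energy hβ (g := fun _ => 1) continuous_const
    (C := 1) (n := 0) (fun _ => by simp)

theorem integrableOn_sq_mul_exp_neg_energy {β : ℝ} (hβ : 0 < β) :
    IntegrableOn (fun y => y ^ 2 * exp (-β * energy y)) (Ioi 0) :=
  integrableOn_mul_exp_neg_energy hβ (continuous_pow 2) (C := 1) (n := 2)
    (fun y => by rw [abs_of_nonneg (sq_nonneg y), one_mul, energy_sq]; linarith)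

theorem integrableOn_sq_mul_energy_mul_exp_neg_energy {β : ℝ} (hβ : 0 < β) :
    IntegrableOn (fun y => y ^ 2 * energy y * exp (-β * energy y)) (Ioi 0) :=
  integrableOn_mul_exp_neg_energy hβ ((continuous_pow 2).mul continuous_energy) (C := 1) (n := 3)
    (fun y => by
      rw [abs_of_nonneg (by positivity [energy_pos y]), one_mul,
        show energy y ^ 3 = energy y ^ 2 * energy y by ring, energy_sq]
      exact mul_le_mul_of_nonneg_right (by linarith) (energy_pos y).le)

theorem K2_eq_mul_partitionIntegral {β : ℝ} (hβ : 0 < β) : K2 β = β * partitionIntegral β := by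
  have hderiv (y : ℝ) : HasDerivAt (fun y => y * energy y) ((2 * y ^ 2 + 1) / energy y) y := by
    refine ((hasDerivAt_id y).mul (hasDerivAt_energy y)).congr_deriv ?_
    field_simp [(energy_pos y).ne']
    simp only [id]
    linear_combination energy_sq y
  have hbound (y : ℝ) : |y * energy y| ≤ 1 * energy y ^ 2 := by
    rw [abs_mul, abs_of_pos (energy_pos y), one_mul, sq]
    exact mul_le_mul_of_nonneg_right (abs_le_energy y) (energy_pos y).le
  have hK2 : IntegrableOn (fun y => (2 * y ^ 2 + 1) / energy y * exp (-β * energy y)) (Ioi 0) :=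
    integrableOn_mul_exp_neg_energy hβ
      (((continuous_const.mul (continuous_pow 2)).add continuous_const).div continuous_energy
        fun y => (energy_pos y).ne') (C := 2) (n := 1)
      (fun y => by
        rw [abs_of_nonneg (by positivity [energy_pos y]), div_le_iff₀ (energy_pos y), pow_one,
          mul_assoc, ← sq, energy_sq]
        linarith)
  exact integral_deriv_mul_exp_neg_energy hβ hderiv (by simp) (v := fun y => y ^ 2)
    (fun y => by ring) hbound hK2 (integrableOn_sq_mul_exp_neg_energy hβ)

theorem K1_add_three_mul_partitionIntegral {β : ℝ} (hβ : 0 < β) :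
    K1 β + 3 * partitionIntegral β = β * energyIntegral β := by
  have hderiv (y : ℝ) : HasDerivAt (fun y => y + y ^ 3) (1 + 3 * y ^ 2) y :=
    ((hasDerivAt_id y).add (hasDerivAt_pow 3 y)).congr_deriv (by simp)
  have hbound (y : ℝ) : |y + y ^ 3| ≤ 1 * energy y ^ 3 := by
    rw [show y + y ^ 3 = y * energy y ^ 2 by rw [energy_sq]; ring, abs_mul,
      abs_of_pos (pow_pos (energy_pos y) 2), one_mul, pow_succ' _ 2]
    exact mul_le_mul_of_nonneg_right (abs_le_energy y) (by positivity)
  have hE := integrableOn_exp_neg_energy hβ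
  have hG := (integrableOn_sq_mul_exp_neg_energy hβ).const_mul 3
  have h := integral_deriv_mul_exp_neg_energy hβ hderiv (by simp)
    (v := fun y => y ^ 2 * energy y) (fun y => by linear_combination (-y ^ 2) * energy_sq y)
    hbound
    (integrableOn_mul_exp_neg_energy hβ (by fun_prop) (C := 3) (n := 2)
      (fun y => by rw [abs_of_pos (by positivity), energy_sq]; linarith))
    (integrableOn_sq_mul_energy_mul_exp_neg_energy hβ)
  simp only [add_mul, one_mul, mul_assoc (3 : ℝ)] at h
  rw [integral_add hE hG, integral_const_mul] at h
  exact h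

theorem partitionIntegral_pos {β : ℝ} (hβ : 0 < β) : 0 < partitionIntegral β :=
  integral_pos_of_pos_on (fun y => by positivity) (integrableOn_sq_mul_exp_neg_energy hβ)
    (A := Ioi 0) (by simp) (fun y hy => by have : 0 < y := hy; positivity)

theorem K1_div_K2_add_three_div {β : ℝ} (hβ : 0 < β) :
    K1 β / K2 β + 3 / β = energyIntegral β / partitionIntegral β := by
  have hG := (partitionIntegral_pos hβ).ne'
  rw [K2_eq_mul_partitionIntegral hβ]
  field_simp
  linear_combination K1_add_three_mul_partitionIntegral hβ

theorem energyIntegral_mul_partitionIntegral_lt {a b : ℝ} (ha : 0 < a) (hab : a < b) :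
    energyIntegral b * partitionIntegral a < energyIntegral a * partitionIntegral b := by
  have hb := ha.trans hab
  exact integral_exp_tilt_cross_lt (w := fun y => y ^ 2) (fun y => sq_nonneg y) hab
    (integrableOn_sq_mul_exp_neg_energy ha) (integrableOn_sq_mul_exp_neg_energy hb)
    (integrableOn_sq_mul_energy_mul_exp_neg_energy ha)
    (integrableOn_sq_mul_energy_mul_exp_neg_energy hb)
    (A := Ioo 0 1) (B := Ioi 1) (by simp [inter_eq_left.2 Ioo_subset_Ioi_self]) (by simp)
    (fun y hy => by have : 0 < y := hy.1; positivity)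
    (fun z hz => by have : 0 < z := zero_lt_one.trans hz; positivity)
    (fun y hy z hz => energy_lt_energy hy.1.le (hy.2.trans hz))

theorem etilde_strictAntiOn :
    StrictAntiOn (fun β => K1 β / K2 β + 3 / β) (Set.Ioi (0:ℝ)) := by
  intro a ha b hb hab
  simp only [K1_div_K2_add_three_div ha, K1_div_K2_add_three_div hb]
  rw [div_lt_div_iff₀ (partitionIntegral_pos hb) (partitionIntegral_pos ha)]
  exact energyIntegral_mul_partitionIntegral_lt ha hab
end
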